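/- For integers m ≥ 3 and n ≥ 7, the minimum size of a self-identifying code of K_m × P_n satisfies γ^SID(K_m × P_n) ≤ ⌈(n+1)/3⌉·(m+3) + m. -/

import Mathlib

open SimpleGraph Set

/-- Closed neighborhood of a vertex. -/
def cNbr {V : Type*} (G : SimpleGraph V) (v : V) : Set V := insert v (G.neighborSet v)

/-- `S` is a self-identifying code of `G`. -/
def IsSID {V : Type*} (G : SimpleGraph V) (S : Set V) : Prop :=
  S.Nonempty ∧ ∀ v : V, (cNbr G v ∩ S).Nonempty ∧
    (⋂ c ∈ cNbr G v ∩ S, cNbr G c) = {v}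

/-- Minimum cardinality of a self-identifying code. -/
noncomputable def gammaSID {V : Type*} (G : SimpleGraph V) : ℕ :=
  sInf {k | ∃ S : Set V, IsSID G S ∧ S.ncard = k}

/-- Direct product of the complete graph `K_m` with the path `P_n`. -/
def KmPn (m n : ℕ) : SimpleGraph (Fin m × Fin n) where
  Adj u w := u.1 ≠ w.1 ∧ ((u.2 : ℕ) + 1 = (w.2 : ℕ) ∨ (w.2 : ℕ) + 1 = (u.2 : ℕ))
  symm := ⟨fun u w h => ⟨h.1.symm, h.2.symm⟩⟩
  loopless := ⟨fun u h => h.1 rfl⟩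

/-- Direct product of the complete graph `K_m` with the cycle `C_n`. -/
def KmCn (m n : ℕ) : SimpleGraph (Fin m × ZMod n) where
  Adj u w := u.1 ≠ w.1 ∧ (u.2 + 1 = w.2 ∨ w.2 + 1 = u.2)
  symm := ⟨fun u w h => ⟨h.1.symm, h.2.symm⟩⟩
  loopless := ⟨fun u h => h.1 rfl⟩


/-!
The code `C` takes the columns `j ≡ 0 (mod 3)` and the last two columns whole; between the
full columns `3k` and `3k + 3` it takes row `k % 2` of column `3k + 1` and rows `k % 2` and `2`
of column `3k + 2` (rows `0, 1, 2` in column `1`). That is `m + 3` vertices per block of three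
columns and `2m + 2` more at the ends.

Since `m ≥ 3`, a full column next to `v` forces every vertex of `⋂ c ∈ N[v] ∩ C, N[c]` into the
row of `v`, on one of the two sides of that column; `v ∈ C`, or a code vertex on the other side
of `v`, leaves only `v`. A vertex `v` of a full column with no full neighbouring column has two
code neighbours (this is what the alternating rows `k % 2` achieve), and as neighbours of `v`
are pairwise non-adjacent, no neighbour of `v` lies in both of their closed neighbourhoods.
-/
section general

variable {V : Type*} {G : SimpleGraph V}

lemma mem_cNbr_comm {u v : V} : u ∈ cNbr G v ↔ v ∈ cNbr G u := by
  simp only [cNbr, mem_insert_iff, mem_neighborSet, G.adj_comm, eq_comm]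

lemma isSID_of_forall_eq [Nonempty V] {S : Set V} (hdom : ∀ v, (cNbr G v ∩ S).Nonempty)
    (hid : ∀ v u, (∀ c ∈ cNbr G v ∩ S, u ∈ cNbr G c) → u = v) : IsSID G S := by
  obtain ⟨v₀⟩ := ‹Nonempty V›
  refine ⟨(hdom v₀).mono inter_subset_right, fun v => ⟨hdom v, ?_⟩⟩
  exact eq_singleton_iff_unique_mem.mpr
    ⟨mem_iInter₂.mpr fun c hc => mem_cNbr_comm.mp hc.1, fun u hu => hid v u (mem_iInter₂.mp hu)⟩

lemma gammaSID_le_ncard {S : Set V} (hS : IsSID G S) : gammaSID G ≤ S.ncard :=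
  Nat.sInf_le ⟨S, hS, rfl⟩

end general

abbrev NearCell (i j i' j' : ℕ) : Prop :=
  (i = i' ∧ j = j') ∨ (i ≠ i' ∧ (j + 1 = j' ∨ j' + 1 = j))

lemma mem_cNbr_KmPn {m n : ℕ} {u v : Fin m × Fin n} :
    u ∈ cNbr (KmPn m n) v ↔ NearCell u.1 u.2 v.1 v.2 := by
  simp only [cNbr, mem_insert_iff, mem_neighborSet, KmPn, Prod.ext_iff, Fin.ext_iff]
  omega

abbrev codeCell (n i j : ℕ) : Prop :=
  j % 3 = 0 ∨ n - 2 ≤ j ∨ (j = 1 ∧ i < 3) ∨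
    (j % 3 = 1 ∧ 2 ≤ j ∧ j ≤ n - 3 ∧ i = j / 3 % 2) ∨
    (j % 3 = 2 ∧ j ≤ n - 3 ∧ (i = j / 3 % 2 ∨ i = 2))

def sidCode (m n : ℕ) : Set (Fin m × Fin n) := {p | codeCell n p.1 p.2}

/-- `(x, y) ∈ ⋂ c ∈ N[(a, J)] ∩ C, N[c]`, in coordinates. -/
def InCodeNbhds (m n a J x y : ℕ) : Prop :=
  ∀ k j, k < m → j < n → NearCell k j a J → codeCell n k j → NearCell x y k j

namespace InCodeNbhds

variable {m n a J x y k j : ℕ}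

lemma of_self (hu : InCodeNbhds m n a J x y) (ha : a < m) (hJ : J < n) (hc : codeCell n a J) :
    NearCell x y a J :=
  hu a J ha hJ (Or.inl ⟨rfl, rfl⟩) hc

lemma of_adj (hu : InCodeNbhds m n a J x y) (hk : k < m) (hj : j < n) (hka : k ≠ a)
    (hjJ : j + 1 = J ∨ J + 1 = j) (hc : codeCell n k j) : NearCell x y k j :=
  hu k j hk hj (Or.inr ⟨hka, hjJ⟩) hc

lemma of_full_column (hu : InCodeNbhds m n a J x y) (hm : 3 ≤ m) (hx : x < m) (hj : j < n)
    (hjJ : j + 1 = J ∨ J + 1 = j) (hfull : j % 3 = 0 ∨ n - 2 ≤ j) :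
    x = a ∧ (y = j + 1 ∨ y + 1 = j) := by
  have h : ∀ k < m, k ≠ a → NearCell x y k j := fun k hk hka => hu.of_adj hk hj hka hjJ (by omega)
  -- one of the rows `0, 1, 2` avoids both `a` and `x`
  have h0 := h 0 (by omega)
  have h1 := h 1 (by omega)
  have h2 := h 2 (by omega)
  have hx := h x hx
  omega

lemma eq_of_mod_three_eq_zero (hu : InCodeNbhds m n a J x y) (hm : 3 ≤ m) (ha : a < m)
    (hx : x < m) (hJ : 0 < J) (hJn : J + 3 ≤ n) (h3 : J % 3 = 0) : x = a ∧ y = J := by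
  have hv := hu.of_self ha (by omega) (by omega)
  by_cases hlast : J + 3 = n
  · have := hu.of_full_column hm hx (j := J + 1) (by omega) (by omega) (by omega)
    omega
  by_cases hrow : a = J / 3 % 2
  · have h₁ := hu.of_adj (k := (J - 1) / 3 % 2) (j := J - 1) (by omega) (by omega) (by omega)
      (by omega) (by omega)
    have h₂ := hu.of_adj (k := 2) (j := J - 1) (by omega) (by omega) (by omega) (by omega)
      (by omega)
    omega
  · obtain ⟨k, hk, hka⟩ : ∃ k, (k = (J - 1) / 3 % 2 ∨ k = 2) ∧ k ≠ a :=
      ⟨if a = 2 then (J - 1) / 3 % 2 else 2, by split_ifs <;> omega⟩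
    have h₁ := hu.of_adj (k := J / 3 % 2) (j := J + 1) (by omega) (by omega) (by omega)
      (by omega) (by omega)
    have h₂ := hu.of_adj (k := k) (j := J - 1) (by omega) (by omega) hka (by omega) (by omega)
    omega

lemma eq_of_mod_three_eq_one (hu : InCodeNbhds m n a J x y) (hm : 3 ≤ m) (hx : x < m)
    (hJn : J + 3 ≤ n) (h3 : J % 3 = 1) : x = a ∧ y = J := by
  have hcol := hu.of_full_column hm hx (j := J - 1) (by omega) (by omega) (by omega)
  obtain ⟨k, hk, hka⟩ : ∃ k, (k = (J + 1) / 3 % 2 ∨ k = 2) ∧ k ≠ a :=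
    ⟨if a = 2 then (J + 1) / 3 % 2 else 2, by split_ifs <;> omega⟩
  have h := hu.of_adj (k := k) (j := J + 1) (by omega) (by omega) hka (by omega) (by omega)
  omega

lemma eq_of_mod_three_eq_two (hu : InCodeNbhds m n a J x y) (hm : 3 ≤ m) (ha : a < m)
    (hx : x < m) (hJn : J + 3 ≤ n) (h3 : J % 3 = 2) : x = a ∧ y = J := by
  have hcol := hu.of_full_column hm hx (j := J + 1) (by omega) (by omega) (by omega)
  by_cases hv : codeCell n a J
  · have := hu.of_self ha (by omega) hv
    omega
  · have h := hu.of_adj (k := (J - 1) / 3 % 2) (j := J - 1) (by omega) (by omega) (by omega)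
      (by omega) (by omega)
    omega

lemma eq (hu : InCodeNbhds m n a J x y) (hm : 3 ≤ m) (hn : 2 ≤ n) (ha : a < m) (hJ : J < n)
    (hx : x < m) : x = a ∧ y = J := by
  rcases (by omega : J = 0 ∨ n - 2 ≤ J ∨ (0 < J ∧ J + 3 ≤ n)) with h0 | hlast | ⟨hJ₀, hJn⟩
  · obtain ⟨k₁, k₂, hk₁, hk₂, hk, hk₁a, hk₂a⟩ :
        ∃ k₁ k₂, k₁ < 3 ∧ k₂ < 3 ∧ k₁ ≠ k₂ ∧ k₁ ≠ a ∧ k₂ ≠ a :=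
      ⟨if a = 0 then 1 else 0, if a = 2 then 1 else 2, by split_ifs <;> omega⟩
    have hv := hu.of_self ha hJ (by omega)
    have h₁ := hu.of_adj (k := k₁) (j := 1) (by omega) (by omega) hk₁a (by omega) (by omega)
    have h₂ := hu.of_adj (k := k₂) (j := 1) (by omega) (by omega) hk₂a (by omega) (by omega)
    omega
  · have hv := hu.of_self ha hJ (by omega)
    by_cases hJ₁ : J = n - 1
    · have := hu.of_full_column hm hx (j := n - 2) (by omega) (by omega) (by omega)
      omega
    · have := hu.of_full_column hm hx (j := n - 1) (by omega) (by omega) (by omega)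
      omega
  · rcases (by omega : J % 3 = 0 ∨ J % 3 = 1 ∨ J % 3 = 2) with h3 | h3 | h3
    · exact hu.eq_of_mod_three_eq_zero hm ha hx hJ₀ hJn h3
    · exact hu.eq_of_mod_three_eq_one hm hx hJn h3
    · exact hu.eq_of_mod_three_eq_two hm ha hx hJn h3

end InCodeNbhds

open Finset in
def codeCover (m n : ℕ) : Finset (ℕ × ℕ) :=
  range m ×ˢ {n - 2, n - 1} ∪ (range 3 ×ˢ {1} ∪
    ((range m ×ˢ range (n / 3)).image (fun p => (p.1, 3 * p.2)) ∪
    ((range (n / 3) ×ˢ {1, 2}).image (fun p => (p.1 % 2, 3 * p.1 + p.2)) ∪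
    (range (n / 3)).image (fun k => (2, 3 * k + 2)))))

lemma mem_codeCover {m n i j : ℕ} (hi : i < m) (hj : j < n) (h : codeCell n i j) :
    (i, j) ∈ codeCover m n := by
  simp only [codeCover, Finset.mem_union, Finset.mem_image, Finset.mem_product, Finset.mem_range,
    Finset.mem_insert, Finset.mem_singleton, Prod.mk.injEq, Prod.exists]
  by_cases hlast : n - 2 ≤ j
  · exact Or.inl (by omega)
  rcases (by omega : j % 3 = 0 ∨ (j = 1 ∧ i < 3) ∨ (j % 3 ≠ 0 ∧ j + 3 ≤ n ∧ i = j / 3 % 2) ∨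
      (j % 3 = 2 ∧ j + 3 ≤ n ∧ i = 2)) with h0 | h1 | hrow | h2
  · exact Or.inr (Or.inr (Or.inl ⟨i, j / 3, by omega⟩))
  · exact Or.inr (Or.inl (by omega))
  · exact Or.inr (Or.inr (Or.inr (Or.inl ⟨j / 3, j % 3, by omega⟩)))
  · exact Or.inr (Or.inr (Or.inr (Or.inr ⟨j / 3, by omega⟩)))

open Finset in
lemma card_codeCover_le (m n : ℕ) : #(codeCover m n) ≤ (n / 3 + 1) * (m + 3) + m := by
  calc #(codeCover m n) ≤ m * 2 + (3 + (m * (n / 3) + ((n / 3) * 2 + n / 3))) := by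
        unfold codeCover
        grw [Finset.card_union_le, Finset.card_union_le, Finset.card_union_le,
          Finset.card_union_le, card_image_le, card_image_le, card_image_le]
        simp only [card_product, card_range, Finset.card_singleton, mul_one]
        grw [card_le_two, card_le_two]
    _ = (n / 3 + 1) * (m + 3) + m := by ring

lemma ncard_sidCode_le (m n : ℕ) : (sidCode m n).ncard ≤ (n / 3 + 1) * (m + 3) + m := by
  have hinj : (Prod.map Fin.val Fin.val : Fin m × Fin n → ℕ × ℕ).Injective :=
    Fin.val_injective.prodMap Fin.val_injective
  calc (sidCode m n).ncard = (Prod.map Fin.val Fin.val '' sidCode m n).ncard :=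
        (ncard_image_of_injective _ hinj).symm
    _ ≤ (codeCover m n : Set (ℕ × ℕ)).ncard :=
        ncard_le_ncard (image_subset_iff.mpr fun p hp => mem_codeCover p.1.2 p.2.2 hp)
    _ = (codeCover m n).card := ncard_coe_finset _
    _ ≤ (n / 3 + 1) * (m + 3) + m := card_codeCover_le m n

lemma exists_codeCell_nearCell {m n a J : ℕ} (hm : 2 ≤ m) (ha : a < m) (hJ : J < n) :
    ∃ k j, k < m ∧ j < n ∧ NearCell k j a J ∧ codeCell n k j := by
  by_cases hv : codeCell n a J
  · exact ⟨a, J, ha, hJ, Or.inl ⟨rfl, rfl⟩, hv⟩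
  · refine ⟨if a = 0 then 1 else 0, if J % 3 = 1 then J - 1 else J + 1, ?_⟩
    split_ifs <;> omega

theorem isSID_sidCode {m n : ℕ} (hm : 3 ≤ m) (hn : 2 ≤ n) : IsSID (KmPn m n) (sidCode m n) := by
  have : Nonempty (Fin m × Fin n) := ⟨(⟨0, by omega⟩, ⟨0, by omega⟩)⟩
  refine isSID_of_forall_eq (fun v => ?_) (fun v u hu => ?_)
  · obtain ⟨k, j, hk, hj, hnear, hc⟩ := exists_codeCell_nearCell (by omega) v.1.2 v.2.2
    exact ⟨(⟨k, hk⟩, ⟨j, hj⟩), mem_cNbr_KmPn.mpr hnear, hc⟩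
  · have hu' : InCodeNbhds m n v.1 v.2 u.1 u.2 := fun k j hk hj hnear hc =>
      mem_cNbr_KmPn.mp (hu (⟨k, hk⟩, ⟨j, hj⟩) ⟨mem_cNbr_KmPn.mpr hnear, hc⟩)
    obtain ⟨h₁, h₂⟩ := hu'.eq hm hn v.1.2 v.2.2 u.1.2
    exact Prod.ext (Fin.ext h₁) (Fin.ext h₂)

theorem stmt14 (m n : ℕ) (hm : 3 ≤ m) (hn : 7 ≤ n) :
    gammaSID (KmPn m n) ≤ (n + 1 + 2) / 3 * (m + 3) + m := by
  calc gammaSID (KmPn m n) ≤ (sidCode m n).ncard :=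
        gammaSID_le_ncard (isSID_sidCode hm (by omega))
    _ ≤ (n / 3 + 1) * (m + 3) + m := ncard_sidCode_le m n
    _ = (n + 1 + 2) / 3 * (m + 3) + m := by rw [show (n + 1 + 2) / 3 = n / 3 + 1 by omega]
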